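/- Let $K$ be a number field that is Galois over $\mathbb{Q}$ with Galois group $G$, let $p$ be a rational prime that splits completely in $K$, let $\alpha \in \mathcal{O}_K$ generate a prime ideal of $\mathcal{O}_K$ lying above $p$, and let $N$ be a positive integer. Then for all but finitely many rational primes $p'$ the following holds: for any two families $(m_\sigma)_{\sigma \in G}$ and $(m'_\sigma)_{\sigma \in G}$ of nonnegative integers with $m_\sigma \leq N$ and $m'_\sigma \leq N$ for all $\sigma$, if $\prod_{\sigma \in G} \sigma(\alpha)^{m_\sigma} \equiv \prod_{\sigma \in G} \sigma(\alpha)^{m'_\sigma} \pmod{\mathfrak{q}}$ for some maximal ideal $\mathfrak{q}$ of $\mathcal{O}_K$ lying above $p'$, then $m_\sigma = m'_\sigma$ for all $\sigma \in G$. -/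

import Mathlib

set_option linter.unusedSectionVars false
set_option synthInstance.maxHeartbeats 1000000

open NumberField
open scoped Classical

section helpers

variable {K : Type*} [Field K] [NumberField K] [IsGalois ℚ K]

/-- abbreviation for the restricted Galois action -/
noncomputable abbrev galR (σ : K ≃ₐ[ℚ] K) : 𝓞 K ≃ₐ[ℤ] 𝓞 K := galRestrict ℤ ℚ K (𝓞 K) σ

lemma galR_inv_apply (σ : K ≃ₐ[ℚ] K) (x : 𝓞 K) : galR σ (galR σ⁻¹ x) = x := by
  have h : galR σ * galR σ⁻¹ = 1 := by
    rw [← map_mul (galRestrict ℤ ℚ K (𝓞 K)) σ σ⁻¹, mul_inv_cancel, map_one]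
  have : galR σ (galR σ⁻¹ x) = (galR σ * galR σ⁻¹) x := rfl
  rw [this, h]
  rfl

lemma comap_algebraMap_eq {q : ℕ} (hq : q.Prime) (𝔮 : Ideal (𝓞 K)) [h𝔮 : 𝔮.IsPrime]
    (hne : 𝔮 ≠ ⊤) (hmem : (q : 𝓞 K) ∈ 𝔮) :
    Ideal.comap (algebraMap ℤ (𝓞 K)) 𝔮 = Ideal.span {(q : ℤ)} := by
  have hmax : (Ideal.span {(q : ℤ)}).IsMaximal :=
    PrincipalIdealRing.isMaximal_of_irreducible (Nat.prime_iff_prime_int.mp hq).irreducible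
  have hle : Ideal.span {(q : ℤ)} ≤ Ideal.comap (algebraMap ℤ (𝓞 K)) 𝔮 := by
    rw [Ideal.span_le, Set.singleton_subset_iff]
    simpa [Ideal.mem_comap] using hmem
  refine (hmax.eq_of_le (fun htop => hne ?_) hle).symm
  rw [Ideal.eq_top_iff_one] at htop ⊢
  simpa using htop

lemma galR_apply_inv (σ : K ≃ₐ[ℚ] K) (x : 𝓞 K) : galR σ⁻¹ (galR σ x) = x := by
  simpa using galR_inv_apply σ⁻¹ x

lemma span_galR_eq_comap (σ : K ≃ₐ[ℚ] K) (α : 𝓞 K) :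
    Ideal.span {galR σ α} = Ideal.comap (galR σ⁻¹) (Ideal.span {α}) := by
  ext x
  rw [Ideal.mem_comap, Ideal.mem_span_singleton, Ideal.mem_span_singleton]
  constructor
  · rintro ⟨c, rfl⟩
    exact ⟨galR σ⁻¹ c, by rw [map_mul, galR_apply_inv]⟩
  · rintro ⟨c, hc⟩
    exact ⟨galR σ c, by rw [← map_mul, ← hc, galR_inv_apply]⟩

variable {p : ℕ} {α : 𝓞 K}

lemma alpha_ne_zero (hp : p.Prime) (hαp : (p : 𝓞 K) ∈ Ideal.span {α}) : α ≠ 0 := by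
  rintro rfl
  rw [Ideal.span_singleton_eq_bot.mpr rfl, Ideal.mem_bot] at hαp
  exact Nat.cast_ne_zero.mpr hp.ne_zero hαp

lemma span_alpha_isMaximal (hp : p.Prime) (hα : (Ideal.span {α}).IsPrime)
    (hαp : (p : 𝓞 K) ∈ Ideal.span {α}) : (Ideal.span {α}).IsMaximal :=
  hα.isMaximal (by
    rw [Ne, Ideal.span_singleton_eq_bot]
    exact alpha_ne_zero hp hαp)

lemma span_galR_isMaximal (hp : p.Prime) (hα : (Ideal.span {α}).IsPrime)
    (hαp : (p : 𝓞 K) ∈ Ideal.span {α}) (σ : K ≃ₐ[ℚ] K) :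
    (Ideal.span {galR σ α}).IsMaximal := by
  rw [span_galR_eq_comap]
  have := span_alpha_isMaximal hp hα hαp
  exact Ideal.comap_isMaximal_of_surjective _ (galR σ⁻¹).surjective

lemma natCast_mem_span_galR (hαp : (p : 𝓞 K) ∈ Ideal.span {α}) (σ : K ≃ₐ[ℚ] K) :
    (p : 𝓞 K) ∈ Ideal.span {galR σ α} := by
  rw [span_galR_eq_comap, Ideal.mem_comap, map_natCast]
  exact hαp

lemma galR_one_apply (x : 𝓞 K) : galR (1 : K ≃ₐ[ℚ] K) x = x := by
  have h := DFunLike.congr_fun (map_one (galRestrict ℤ ℚ K (𝓞 K))) x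
  exact h

/-- Transitivity of the Galois action on primes above `p`. -/
lemma exists_galR_comap_eq (hp : p.Prime) (Q Q' : Ideal (𝓞 K)) (hQ : Q.IsMaximal)
    (hQ' : Q'.IsMaximal) (hpQ : (p : 𝓞 K) ∈ Q) (hpQ' : (p : 𝓞 K) ∈ Q') :
    ∃ σ : K ≃ₐ[ℚ] K, Ideal.comap (galR σ) Q' = Q := by
  haveI := hQ.isPrime
  haveI := hQ'.isPrime
  by_contra h
  push_neg at h
  have hnle : ∀ σ : K ≃ₐ[ℚ] K, ¬ (Q ≤ Ideal.comap (galR σ) Q') := by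
    intro σ hle
    have hne : Ideal.comap (galR σ) Q' ≠ ⊤ := by
      intro htop
      apply hQ'.ne_top
      rw [Ideal.eq_top_iff_one] at htop ⊢
      simpa using htop
    exact h σ (hQ.eq_of_le hne hle).symm
  have hsub : ¬ ((Q : Set (𝓞 K)) ⊆
      ⋃ σ ∈ ((Finset.univ : Finset (K ≃ₐ[ℚ] K)) : Set (K ≃ₐ[ℚ] K)),
        ((Ideal.comap (galR σ) Q' : Ideal (𝓞 K)) : Set (𝓞 K))) := by
    rw [Ideal.subset_union_prime 1 1 (fun σ _ _ _ => Ideal.IsPrime.comap _)]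
    push_neg
    exact fun σ _ => hnle σ
  obtain ⟨x, hxQ, hx⟩ := Set.not_subset.mp hsub
  have hxn : ∀ σ : K ≃ₐ[ℚ] K, galR σ x ∉ Q' := by
    intro σ hσ
    exact hx (Set.mem_biUnion (by simp) (Ideal.mem_comap.mpr hσ))
  have h1 : x ∣ ∏ σ : K ≃ₐ[ℚ] K, galR σ x := by
    have := Finset.dvd_prod_of_mem (fun σ : K ≃ₐ[ℚ] K => galR σ x) (Finset.mem_univ 1)
    simpa [galR_one_apply] using this
  obtain ⟨c, hc⟩ := h1
  have hzQ : (∏ σ : K ≃ₐ[ℚ] K, galR σ x) ∈ Q := hc ▸ Q.mul_mem_right c hxQ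
  have hznorm := prod_galRestrict_eq_norm ℤ ℚ K (𝓞 K) x
  rw [hznorm] at hzQ
  have hn : _ ∈ Ideal.comap (algebraMap ℤ (𝓞 K)) Q := Ideal.mem_comap.mpr hzQ
  rw [comap_algebraMap_eq hp Q hQ.ne_top hpQ,
    ← comap_algebraMap_eq hp Q' hQ'.ne_top hpQ'] at hn
  have hzQ' : (∏ σ : K ≃ₐ[ℚ] K, galR σ x) ∈ Q' := by
    rw [hznorm]
    exact Ideal.mem_comap.mp hn
  obtain ⟨σ, _, hσ⟩ := Ideal.IsPrime.prod_mem_iff.mp hzQ'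
  exact hxn σ hσ

open UniqueFactorizationMonoid in
lemma card_factors_eq (hp : p.Prime)
    (hsplit : ∀ Q : Ideal (𝓞 K), Q.IsMaximal → Q.comap (algebraMap ℤ (𝓞 K)) = Ideal.span {(p : ℤ)} →
      Ideal.ramificationIdx' (Ideal.span {(p : ℤ)}) Q = 1 ∧
      Ideal.inertiaDeg' (Ideal.span {(p : ℤ)}) Q = 1) :
    (factors (Ideal.map (algebraMap ℤ (𝓞 K)) (Ideal.span {(p : ℤ)}))).toFinset.card
      = Module.finrank ℚ K := by
  haveI hmax : (Ideal.span {(p : ℤ)}).IsMaximal :=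
    PrincipalIdealRing.isMaximal_of_irreducible (Nat.prime_iff_prime_int.mp hp).irreducible
  have hp0 : (Ideal.span {(p : ℤ)} : Ideal ℤ) ≠ ⊥ := by
    rw [Ne, Ideal.span_singleton_eq_bot]
    exact_mod_cast hp.ne_zero
  have hsum := Ideal.sum_ramification_inertia (R := ℤ) (S := 𝓞 K)
    (p := Ideal.span {(p : ℤ)}) ℚ K hp0
  have hone : ∀ P ∈ (factors (Ideal.map (algebraMap ℤ (𝓞 K)) (Ideal.span {(p : ℤ)}))).toFinset,
      Ideal.ramificationIdx' (Ideal.span {(p : ℤ)}) P *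
      Ideal.inertiaDeg' (Ideal.span {(p : ℤ)}) P = 1 := by
    intro P hP
    rw [Multiset.mem_toFinset] at hP
    have hprime : Prime P := prime_of_factor P hP
    have hdvd := dvd_of_mem_factors hP
    have hle := Ideal.le_of_dvd hdvd
    have hpmem : (p : 𝓞 K) ∈ P := by
      apply hle
      have : algebraMap ℤ (𝓞 K) (p : ℤ) ∈
          Ideal.map (algebraMap ℤ (𝓞 K)) (Ideal.span {(p : ℤ)}) :=
        Ideal.mem_map_of_mem _ (Ideal.subset_span (Set.mem_singleton _))
      simpa using this
    haveI hPp : P.IsPrime := Ideal.isPrime_of_prime hprime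
    have hPmax : P.IsMaximal := hPp.isMaximal hprime.ne_zero
    obtain ⟨he, hf⟩ := hsplit P hPmax (comap_algebraMap_eq hp P hPmax.ne_top hpmem)
    rw [he, hf]
  rw [Finset.sum_congr rfl hone, Finset.sum_const, smul_eq_mul, mul_one] at hsum
  exact hsum

open UniqueFactorizationMonoid in
lemma galR_span_injective (hp : p.Prime)
    (hsplit : ∀ Q : Ideal (𝓞 K), Q.IsMaximal → Q.comap (algebraMap ℤ (𝓞 K)) = Ideal.span {(p : ℤ)} →
      Ideal.ramificationIdx' (Ideal.span {(p : ℤ)}) Q = 1 ∧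
      Ideal.inertiaDeg' (Ideal.span {(p : ℤ)}) Q = 1)
    (hα : (Ideal.span {α}).IsPrime) (hαp : (p : 𝓞 K) ∈ Ideal.span {α}) :
    Function.Injective (fun σ : K ≃ₐ[ℚ] K => Ideal.span {galR σ α}) := by
  set I := Ideal.map (algebraMap ℤ (𝓞 K)) (Ideal.span {(p : ℤ)}) with hI
  have hIspan : I = Ideal.span {(p : 𝓞 K)} := by
    rw [hI, Ideal.map_span, Set.image_singleton, map_natCast]
  have hI0 : I ≠ 0 := by
    rw [hIspan, Ne, Ideal.zero_eq_bot, Ideal.span_singleton_eq_bot]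
    exact Nat.cast_ne_zero.mpr hp.ne_zero
  have hαz : α ≠ 0 := alpha_ne_zero hp hαp
  have hmem : ∀ σ : K ≃ₐ[ℚ] K, Ideal.span {galR σ α} ∈ (factors I).toFinset := by
    intro σ
    rw [Multiset.mem_toFinset, factors_eq_normalizedFactors,
      mem_normalizedFactors_iff hI0]
    constructor
    · have hne : (Ideal.span {galR σ α} : Ideal (𝓞 K)) ≠ ⊥ := by
        rw [Ne, Ideal.span_singleton_eq_bot]
        exact fun h => hαz ((galR σ).injective (h.trans (map_zero _).symm))
      exact (Ideal.prime_iff_isPrime hne).mpr (span_galR_isMaximal hp hα hαp σ).isPrime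
    · rw [Ideal.dvd_iff_le, hIspan, Ideal.span_le, Set.singleton_subset_iff]
      exact natCast_mem_span_galR hαp σ
  set F : (K ≃ₐ[ℚ] K) → {P // P ∈ (factors I).toFinset} := fun σ => ⟨_, hmem σ⟩ with hF
  have hsurj : Function.Surjective F := by
    rintro ⟨P, hP⟩
    rw [Multiset.mem_toFinset, factors_eq_normalizedFactors,
      mem_normalizedFactors_iff hI0] at hP
    obtain ⟨hPp', hPdvd⟩ := hP
    haveI hPp : P.IsPrime := Ideal.isPrime_of_prime hPp'
    have hPmax : P.IsMaximal := hPp.isMaximal hPp'.ne_zero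
    have hpP : (p : 𝓞 K) ∈ P := Ideal.le_of_dvd hPdvd
      (by rw [hIspan]; exact Ideal.subset_span (Set.mem_singleton _))
    obtain ⟨σ, hσ⟩ := exists_galR_comap_eq hp P (Ideal.span {α}) hPmax
      (span_alpha_isMaximal hp hα hαp) hpP hαp
    refine ⟨σ⁻¹, Subtype.ext ?_⟩
    show Ideal.span {galR σ⁻¹ α} = P
    rw [span_galR_eq_comap, inv_inv, hσ]
  have hcard : Fintype.card (K ≃ₐ[ℚ] K) = Fintype.card {P // P ∈ (factors I).toFinset} := by
    rw [Fintype.card_coe, card_factors_eq hp hsplit, ← Nat.card_eq_fintype_card, IsGalois.card_aut_eq_finrank]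
  have hbij : Function.Bijective F :=
    (Fintype.bijective_iff_surjective_and_card F).mpr ⟨hsurj, hcard⟩
  intro σ τ h
  exact hbij.injective (Subtype.ext h)

lemma galR_ne_zero (hp : p.Prime) (hαp : (p : 𝓞 K) ∈ Ideal.span {α}) (σ : K ≃ₐ[ℚ] K) :
    galR σ α ≠ 0 :=
  fun h => alpha_ne_zero hp hαp ((galR σ).injective (h.trans (map_zero _).symm))

lemma prod_pow_galR_inj (hp : p.Prime)
    (hsplit : ∀ Q : Ideal (𝓞 K), Q.IsMaximal → Q.comap (algebraMap ℤ (𝓞 K)) = Ideal.span {(p : ℤ)} →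
      Ideal.ramificationIdx' (Ideal.span {(p : ℤ)}) Q = 1 ∧
      Ideal.inertiaDeg' (Ideal.span {(p : ℤ)}) Q = 1)
    (hα : (Ideal.span {α}).IsPrime) (hαp : (p : 𝓞 K) ∈ Ideal.span {α})
    {m m' : (K ≃ₐ[ℚ] K) → ℕ}
    (h : ∏ σ : K ≃ₐ[ℚ] K, (galR σ α) ^ m σ = ∏ σ : K ≃ₐ[ℚ] K, (galR σ α) ^ m' σ) :
    m = m' := by
  have hinj := galR_span_injective hp hsplit hα hαp
  have hprime : ∀ τ : K ≃ₐ[ℚ] K, Prime (galR τ α) := fun τ => by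
    rw [← Ideal.span_singleton_prime (galR_ne_zero hp hαp τ)]
    exact (span_galR_isMaximal hp hα hαp τ).isPrime
  funext τ
  have H := congrArg (emultiplicity (galR τ α)) h
  rw [Finset.emultiplicity_prod (hprime τ), Finset.emultiplicity_prod (hprime τ)] at H
  have hval : ∀ (k : (K ≃ₐ[ℚ] K) → ℕ) (σ : K ≃ₐ[ℚ] K),
      emultiplicity (galR τ α) ((galR σ α) ^ k σ) = if σ = τ then (k σ : ℕ∞) else 0 := by
    intro k σ
    by_cases hστ : σ = τ
    · subst hστ
      rw [if_pos rfl, emultiplicity_pow_self_of_prime (hprime σ)]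
    · rw [if_neg hστ, emultiplicity_pow (hprime τ), emultiplicity_eq_zero.mpr, mul_zero]
      intro hdvd
      apply hστ
      apply hinj
      show Ideal.span {galR σ α} = Ideal.span {galR τ α}
      refine (span_galR_isMaximal hp hα hαp σ).eq_of_le
        (span_galR_isMaximal hp hα hαp τ).ne_top ?_
      exact Ideal.span_singleton_le_span_singleton.mpr hdvd
  rw [Finset.sum_congr rfl (fun σ _ => hval m σ),
    Finset.sum_congr rfl (fun σ _ => hval m' σ), Finset.sum_ite_eq' Finset.univ τ,
    Finset.sum_ite_eq' Finset.univ τ, if_pos (Finset.mem_univ τ),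
    if_pos (Finset.mem_univ τ)] at H
  exact_mod_cast H

/-- A proper ideal of `𝓞 K` contains at most one rational prime. -/
lemma prime_mem_unique (𝔮 : Ideal (𝓞 K)) (hne : 𝔮 ≠ ⊤) :
    {q : ℕ | q.Prime ∧ (q : 𝓞 K) ∈ 𝔮}.Subsingleton := by
  rintro a ⟨ha, hamem⟩ b ⟨hb, hbmem⟩
  by_contra hab
  have hcop : Nat.gcd a b = 1 := (Nat.coprime_primes ha hb).mpr hab
  have h1 : (1 : ℤ) = a * Nat.gcdA a b + b * Nat.gcdB a b := by
    have := Nat.gcd_eq_gcd_ab a b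
    rwa [hcop, Nat.cast_one] at this
  have h2 : (1 : 𝓞 K) = (a : 𝓞 K) * algebraMap ℤ (𝓞 K) (Nat.gcdA a b)
      + (b : 𝓞 K) * algebraMap ℤ (𝓞 K) (Nat.gcdB a b) := by
    have := congrArg (algebraMap ℤ (𝓞 K)) h1
    push_cast at this
    simpa using this
  apply hne
  rw [Ideal.eq_top_iff_one, h2]
  exact 𝔮.add_mem (𝔮.mul_mem_right _ hamem) (𝔮.mul_mem_right _ hbmem)

/-- Only finitely many primes `p'` admit a maximal ideal containing both `p'` and a
fixed nonzero `d`. -/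
lemma finite_bad_primes {d : 𝓞 K} (hd : d ≠ 0) :
    {p' : ℕ | p'.Prime ∧ ∃ 𝔮 : Ideal (𝓞 K), 𝔮.IsMaximal ∧ (p' : 𝓞 K) ∈ 𝔮 ∧ d ∈ 𝔮}.Finite := by
  have hspan : (Ideal.span {d} : Ideal (𝓞 K)) ≠ 0 := by
    rw [Ne, Ideal.zero_eq_bot, Ideal.span_singleton_eq_bot]
    exact hd
  have hDfin : {𝔮 : Ideal (𝓞 K) | 𝔮 ∣ Ideal.span {d}}.Finite := by
    haveI F := UniqueFactorizationMonoid.fintypeSubtypeDvd (Ideal.span {d} : Ideal (𝓞 K)) hspan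
    exact Set.Finite.ofFinset (Finset.univ.image (Subtype.val (p := fun x => x ∣ Ideal.span {d})))
      (fun 𝔮 => by simp [Set.mem_setOf_eq])
  have hDfin' : {𝔮 : Ideal (𝓞 K) | 𝔮.IsMaximal ∧ d ∈ 𝔮}.Finite := by
    refine hDfin.subset ?_
    rintro 𝔮 ⟨hmax, hmem⟩
    rw [Set.mem_setOf_eq, Ideal.dvd_iff_le, Ideal.span_le, Set.singleton_subset_iff]
    exact hmem
  have hT : ∀ 𝔮 ∈ {𝔮 : Ideal (𝓞 K) | 𝔮.IsMaximal ∧ d ∈ 𝔮},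
      ({p' : ℕ | p'.Prime ∧ (p' : 𝓞 K) ∈ 𝔮}).Finite :=
    fun 𝔮 h => (prime_mem_unique 𝔮 h.1.ne_top).finite
  refine (hDfin'.biUnion hT).subset ?_
  rintro p' ⟨hp', 𝔮, hmax, hpm, hdm⟩
  exact Set.mem_biUnion ⟨hmax, hdm⟩ ⟨hp', hpm⟩

end helpers

/-- A prime `p` of `R` splits completely in an `R`-algebra `S` (along `f : R →+* S`):
every maximal ideal of `S` lying over `p` has ramification index `1` and
residue field degree `1`. -/
def TotallySplit {R S : Type*} [CommRing R] [CommRing S] (f : R →+* S) (p : Ideal R) : Prop :=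
  ∀ Q : Ideal S, Q.IsMaximal → Q.comap f = p →
    letI := f.toAlgebra
    Ideal.ramificationIdx' p Q = 1 ∧ Ideal.inertiaDeg' p Q = 1

set_option synthInstance.maxHeartbeats 1000000 in
/-- Let `K/ℚ` be Galois with group `G`, let `p` be a rational prime split completely
in `K`, let `α ∈ 𝓞 K` generate a prime ideal above `p`, and let `N > 0`.  For all but
finitely many rational primes `p'`: whenever two families `(m σ)`, `(m' σ)` of
nonnegative integers bounded by `N` satisfy
`∏ σ, σ(α)^{m σ} ≡ ∏ σ, σ(α)^{m' σ} mod 𝔮` for some maximal ideal `𝔮` above `p'`,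
they are equal. -/
theorem stmt10 (K : Type*) [Field K] [NumberField K] [IsGalois ℚ K]
    (p : ℕ) (hp : p.Prime)
    (hsplit : TotallySplit (algebraMap ℤ (𝓞 K)) (Ideal.span {(p : ℤ)}))
    (α : 𝓞 K) (hα : (Ideal.span {α}).IsPrime) (hαp : (p : 𝓞 K) ∈ Ideal.span {α})
    (N : ℕ) (hN : 0 < N) :
    {p' : ℕ | p'.Prime ∧
      ¬ (∀ (m m' : (K ≃ₐ[ℚ] K) → ℕ), (∀ σ, m σ ≤ N) → (∀ σ, m' σ ≤ N) →
          ∀ 𝔮 : Ideal (𝓞 K), 𝔮.IsMaximal → (p' : 𝓞 K) ∈ 𝔮 →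
          Ideal.Quotient.mk 𝔮 (∏ σ : K ≃ₐ[ℚ] K, (galRestrict ℤ ℚ K (𝓞 K) σ α) ^ m σ) =
            Ideal.Quotient.mk 𝔮 (∏ σ : K ≃ₐ[ℚ] K, (galRestrict ℤ ℚ K (𝓞 K) σ α) ^ m' σ) →
          m = m')}.Finite := by
  classical
  have hsplit' : ∀ Q : Ideal (𝓞 K), Q.IsMaximal →
      Q.comap (algebraMap ℤ (𝓞 K)) = Ideal.span {(p : ℤ)} →
      Ideal.ramificationIdx' (Ideal.span {(p : ℤ)}) Q = 1 ∧
      Ideal.inertiaDeg' (Ideal.span {(p : ℤ)}) Q = 1 := fun Q h1 h2 => by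
    convert hsplit Q h1 h2 <;> exact Subsingleton.elim _ _
  have hB : {m : (K ≃ₐ[ℚ] K) → ℕ | ∀ σ, m σ ≤ N}.Finite := by
    refine Set.Finite.subset (Set.Finite.pi (fun _ : K ≃ₐ[ℚ] K => Set.finite_Iic N)) ?_
    exact fun m hm σ _ => hm σ
  set x : ((K ≃ₐ[ℚ] K) → ℕ) → 𝓞 K :=
    fun m => ∏ σ : K ≃ₐ[ℚ] K, (galRestrict ℤ ℚ K (𝓞 K) σ α) ^ m σ with hx
  have hW : ∀ m m' : (K ≃ₐ[ℚ] K) → ℕ,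
      ({p' : ℕ | m ≠ m' ∧ p'.Prime ∧
        ∃ 𝔮 : Ideal (𝓞 K), 𝔮.IsMaximal ∧ (p' : 𝓞 K) ∈ 𝔮 ∧ x m - x m' ∈ 𝔮}).Finite := by
    intro m m'
    by_cases hmm : m = m'
    · refine Set.finite_empty.subset ?_
      rintro p' ⟨hne, -⟩
      exact absurd hmm hne
    · have hd : x m - x m' ≠ 0 :=
        sub_ne_zero.mpr (fun h => hmm (prod_pow_galR_inj hp hsplit' hα hαp h))
      refine (finite_bad_primes hd).subset ?_
      rintro p' ⟨-, hp', 𝔮, hmax, hpm, hdm⟩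
      exact ⟨hp', 𝔮, hmax, hpm, hdm⟩
  refine Set.Finite.subset (hB.biUnion (fun m _ => hB.biUnion (fun m' _ => hW m m'))) ?_
  rintro p' ⟨hp', hbad⟩
  push_neg at hbad
  obtain ⟨m, m', hm, hm', 𝔮, hmax, hpm, hcong, hne⟩ := hbad
  refine Set.mem_biUnion hm (Set.mem_biUnion hm' ?_)
  exact ⟨hne, hp', 𝔮, hmax, hpm, Ideal.Quotient.eq.mp hcong⟩
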